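/- Let f : R → R³ be a twice continuously differentiable function with |f'(s)| = 1 for all s, and suppose |f''(s)| ≤ κ for all s. Then for all t > 0 with κt < 2, |f(0) - f(t)| ≥ ∫₀^t (1 - κs) ds = t(1 - κt/2). -/

import Mathlib

/-!
Project the chord onto the initial tangent `u = f'(0)`. Since `‖f''‖ ≤ κ`, the tangent moves at
speed at most `κ`, so `⟪f'(s), u⟫ ≥ 1 - κ s`. Hence `s ↦ ⟪f(s) - f(0), u⟫ - (s - κ s² / 2)` is
nondecreasing, giving `⟪f(t) - f(0), u⟫ ≥ t - κ t² / 2`, and Cauchy–Schwarz bounds this projection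
by the chord length.
-/

open Set
open scoped RealInnerProductSpace

section

variable {E : Type*} [NormedAddCommGroup E] [InnerProductSpace ℝ E]

theorem one_sub_mul_abs_le_inner_of_norm_deriv_le {v v' : ℝ → E} {κ : ℝ}
    (hv : ∀ s, HasDerivAt v (v' s) s) (hκ : ∀ s, ‖v' s‖ ≤ κ) (hv₀ : ‖v 0‖ = 1) (s : ℝ) :
    1 - κ * |s| ≤ ⟪v s, v 0⟫ := by
  have hdrift : ‖v s - v 0‖ ≤ κ * |s| := by
    simpa using convex_univ.norm_image_sub_le_of_norm_hasDerivWithin_le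
      (fun x _ => (hv x).hasDerivWithinAt) (fun x _ => hκ x) (mem_univ 0) (mem_univ s)
  have hproj : -‖v s - v 0‖ ≤ ⟪v s - v 0, v 0⟫ := by
    simpa [hv₀] using neg_le_of_abs_le (abs_real_inner_le_norm (v s - v 0) (v 0))
  have hsplit : ⟪v s, v 0⟫ = ⟪v s - v 0, v 0⟫ + 1 := by
    rw [inner_sub_left, real_inner_self_eq_norm_sq, hv₀]
    ring
  linarith

theorem mul_one_sub_half_le_inner_sub {f f' : ℝ → E} {κ t : ℝ} (u : E)
    (hf : ∀ s, HasDerivAt f (f' s) s) (hu : ∀ s ∈ Ioo 0 t, 1 - κ * s ≤ ⟪f' s, u⟫)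
    (ht : 0 ≤ t) : t * (1 - κ * t / 2) ≤ ⟪f t - f 0, u⟫ := by
  set g : ℝ → ℝ := fun s => ⟪f s - f 0, u⟫ - (s - κ * s ^ 2 / 2)
  have hg : ∀ s, HasDerivAt g (⟪f' s, u⟫ - (1 - κ * s)) s := by
    intro s
    have hproj : HasDerivAt (fun s => ⟪f s - f 0, u⟫) ⟪f' s, u⟫ s := by
      simpa using ((hf s).sub_const (f 0)).inner ℝ (hasDerivAt_const s u)
    have hpoly : HasDerivAt (fun s => s - κ * s ^ 2 / 2) (1 - κ * s) s := by
      refine ((hasDerivAt_id' s).sub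
        ((hasDerivAt_pow 2 s).const_mul κ |>.div_const 2)).congr_deriv ?_
      push_cast
      ring
    exact hproj.sub hpoly
  have hmono : MonotoneOn g (Icc 0 t) := by
    refine monotoneOn_of_hasDerivWithinAt_nonneg (convex_Icc 0 t)
      (fun s _ => (hg s).continuousAt.continuousWithinAt)
      (fun s _ => (hg s).hasDerivWithinAt) ?_
    rw [interior_Icc]
    exact fun s hs => sub_nonneg.mpr (hu s hs)
  have hgt := hmono (left_mem_Icc.mpr ht) (right_mem_Icc.mpr ht) ht
  simp only [g, sub_self, inner_zero_left] at hgt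
  linarith

end

theorem stmt10_general (f f' f'' : ℝ → EuclideanSpace ℝ (Fin 3)) (κ : ℝ)
    (hf : ∀ s, HasDerivAt f (f' s) s)
    (hf' : ∀ s, HasDerivAt f' (f'' s) s)
    (hunit : ∀ s, ‖f' s‖ = 1)
    (hκ : ∀ s, ‖f'' s‖ ≤ κ)
    (t : ℝ) (ht : 0 < t) :
    ‖f 0 - f t‖ ≥ t * (1 - κ * t / 2) := by
  have htangent : ∀ s ∈ Ioo 0 t, 1 - κ * s ≤ ⟪f' s, f' 0⟫ := fun s hs => by
    simpa [abs_of_pos hs.1] using one_sub_mul_abs_le_inner_of_norm_deriv_le hf' hκ (hunit 0) s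
  calc t * (1 - κ * t / 2) ≤ ⟪f t - f 0, f' 0⟫ :=
        mul_one_sub_half_le_inner_sub (f' 0) hf htangent ht.le
    _ ≤ ‖f t - f 0‖ * ‖f' 0‖ := real_inner_le_norm _ _
    _ = ‖f 0 - f t‖ := by rw [hunit 0, mul_one, norm_sub_rev]

theorem stmt10 (f f' f'' : ℝ → EuclideanSpace ℝ (Fin 3)) (κ : ℝ)
    (hf : ∀ s, HasDerivAt f (f' s) s)
    (hf' : ∀ s, HasDerivAt f' (f'' s) s)
    (hcont : Continuous f'')
    (hunit : ∀ s, ‖f' s‖ = 1)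
    (hκ : ∀ s, ‖f'' s‖ ≤ κ)
    (t : ℝ) (ht : 0 < t) (hκt : κ * t < 2) :
    ‖f 0 - f t‖ ≥ t * (1 - κ * t / 2) :=
  stmt10_general f f' f'' κ hf hf' hunit hκ t ht
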